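/- arXiv:2103.06975 — 3 statements merged into one kernel-verified Lean document; each statement's English description precedes it below -/
import Mathlib

section
/- Let g = u·p_1^{α_1}···p_m^{α_m} and f = v·p_1^{β_1}···p_m^{β_m} be nonzero homogeneous polynomials of positive degree in C[z_1,...,z_n], where u,v are nonzero constants, p_1,...,p_m are pairwise non-associate primes, and α_j, β_j are positive integers. If (deg g)·g·(∂f/∂z_l) = (deg f)·f·(∂g/∂z_l) for all l ∈ {1,...,n}, then β_j/α_j = (deg f)/(deg g) for all j ∈ {1,...,m}. -/
/-!
Fix `j`, write `P = p j`, `g = P ^ α j * G` and `f = P ^ β j * F` with `P ∤ G`, `P ∤ F`.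
Multiplying `dg · g · ∂f = df · f · ∂g` by `P` and cancelling `P ^ (α j + β j)` leaves
`(dg · β j - df · α j) · G · F · ∂P ≡ 0 (mod P)`. A non-constant polynomial does not divide
its partial derivative in a variable it involves (that derivative is nonzero of smaller degree
in that variable), so the prime `P` divides the constant `dg · β j - df · α j`, which must
vanish.
-/

open MvPolynomial

namespace MvPolynomial

variable {σ R : Type*}

theorem degreeOf_pderiv_lt [CommSemiring R] {i : σ} {p : MvPolynomial σ R}
    (h : degreeOf i p ≠ 0) : degreeOf i (pderiv i p) < degreeOf i p := by
  classical
  refine (degreeOf_lt_iff (Nat.pos_of_ne_zero h)).2 fun m hm => ?_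
  have hm' : m + Finsupp.single i 1 ∈ p.support := by
    rw [mem_support_iff, coeff_pderiv] at hm
    exact mem_support_iff.2 (left_ne_zero_of_mul hm)
  simpa using monomial_le_degreeOf i hm'

theorem pderiv_ne_zero_of_degreeOf_ne_zero [CommSemiring R] [NoZeroDivisors R] [CharZero R]
    {i : σ} {p : MvPolynomial σ R} (h : degreeOf i p ≠ 0) : pderiv i p ≠ 0 := by
  classical
  obtain ⟨m, hm, hmi⟩ : ∃ m ∈ p.support, m i ≠ 0 := by
    by_contra! H
    exact h (le_antisymm (degreeOf_le_iff.2 fun m hm => (H m hm).le) (Nat.zero_le _))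
  have hle : Finsupp.single i 1 ≤ m := Finsupp.single_le_iff.2 (Nat.one_le_iff_ne_zero.2 hmi)
  intro h0
  have := congrArg (coeff (m - Finsupp.single i 1)) h0
  rw [coeff_pderiv, tsub_add_cancel_of_le hle, coeff_zero] at this
  refine mul_ne_zero (mem_support_iff.1 hm) ?_ this
  rw [Finsupp.tsub_apply, Finsupp.single_eq_same]
  norm_cast

theorem degreeOf_le_of_dvd [CommSemiring R] [NoZeroDivisors R] {i : σ}
    {p q : MvPolynomial σ R} (h : p ∣ q) (hq : q ≠ 0) : degreeOf i p ≤ degreeOf i q := by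
  obtain ⟨r, rfl⟩ := h
  rw [degreeOf_mul_eq (left_ne_zero_of_mul hq) (right_ne_zero_of_mul hq)]
  exact Nat.le_add_right _ _

theorem not_dvd_pderiv_of_degreeOf_ne_zero [CommSemiring R] [NoZeroDivisors R] [CharZero R]
    {i : σ} {p : MvPolynomial σ R} (h : degreeOf i p ≠ 0) : ¬p ∣ pderiv i p := fun hdvd =>
  (degreeOf_pderiv_lt h).not_ge (degreeOf_le_of_dvd hdvd (pderiv_ne_zero_of_degreeOf_ne_zero h))

theorem exists_not_dvd_pderiv_of_not_isUnit [Field R] [CharZero R] {p : MvPolynomial σ R}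
    (hp0 : p ≠ 0) (hp : ¬IsUnit p) : ∃ i, ¬p ∣ pderiv i p := by
  obtain ⟨i, hi⟩ : p.vars.Nonempty := by
    rw [Finset.nonempty_iff_ne_empty, Ne, vars_eq_empty_iff_eq_C]
    intro hC
    rw [hC, Ne, C_eq_zero] at hp0
    exact hp (hC ▸ (Ne.isUnit hp0).map C)
  exact ⟨i, not_dvd_pderiv_of_degreeOf_ne_zero (mem_vars_iff_degreeOf_ne_zero.1 hi)⟩

theorem eq_zero_of_prime_dvd_C [Field R] {p : MvPolynomial σ R} (hp : Prime p) {c : R}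
    (h : p ∣ C c) : c = 0 := by
  by_contra hc
  exact hp.not_isUnit (isUnit_of_dvd_unit h ((Ne.isUnit hc).map C))

end MvPolynomial

theorem Prime.not_dvd_prod_pow {M ι : Type*} [CommMonoidWithZero M] [IsCancelMulZero M] {p : M}
    (hp : Prime p) {s : Finset ι} {q : ι → M} (hq : ∀ i ∈ s, Prime (q i))
    (hpq : ∀ i ∈ s, ¬Associated p (q i))
    (k : ι → ℕ) : ¬p ∣ ∏ i ∈ s, q i ^ k i := by
  rw [hp.dvd_finsetProd_iff]
  rintro ⟨i, hi, hdvd⟩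
  exact hpq i hi (hp.associated_of_dvd (hq i hi) (hp.dvd_of_dvd_pow hdvd))

namespace Derivation

variable {R A : Type*} [CommSemiring R] [CommRing A] [Algebra R A] (D : Derivation R A A)

theorem mul_leibniz_pow (a : A) (n : ℕ) : a * D (a ^ n) = n * a ^ n * D a := by
  rw [D.leibniz_pow, nsmul_eq_mul, smul_eq_mul]
  rcases n with _ | n
  · simp
  · rw [Nat.add_sub_cancel, pow_succ]
    ring

theorem prime_dvd_mul_sub_mul_of_mul_map_eq [IsDomain A] {P F G c d : A} {a b : ℕ}
    (hP : Prime P) (hG : ¬P ∣ G) (hF : ¬P ∣ F) (hDP : ¬P ∣ D P)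
    (h : c * (P ^ a * G) * D (P ^ b * F) = d * (P ^ b * F) * D (P ^ a * G)) :
    P ∣ c * b - d * a := by
  set X := (c * b - d * a) * (G * F * D P) + P * (c * G * D F - d * F * D G)
  have hX : P ^ (a + b) * X = 0 := by
    simp only [Derivation.leibniz, smul_eq_mul] at h
    linear_combination P * h - c * P ^ a * G * F * D.mul_leibniz_pow P b
      + d * P ^ b * F * G * D.mul_leibniz_pow P a
  have hdvd : P ∣ (c * b - d * a) * (G * F * D P) :=
    ⟨-(c * G * D F - d * F * D G), by
      linear_combination (mul_eq_zero.1 hX).resolve_left (pow_ne_zero _ hP.ne_zero)⟩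
  refine (hP.dvd_or_dvd hdvd).resolve_right fun h' => ?_
  rcases hP.dvd_or_dvd h' with h' | h'
  · exact (hP.dvd_or_dvd h').elim hG hF
  · exact hDP h'

end Derivation

theorem stmt1_general {n m : ℕ} (u v : ℂ) (hu : u ≠ 0) (hv : v ≠ 0)
    (p : Fin m → MvPolynomial (Fin n) ℂ) (hp : ∀ j, Prime (p j))
    (hnassoc : ∀ i j, i ≠ j → ¬ Associated (p i) (p j))
    (α β : Fin m → ℕ)
    (g f : MvPolynomial (Fin n) ℂ) (dg df : ℕ)
    (hgdef : g = C u * ∏ j, p j ^ α j) (hfdef : f = C v * ∏ j, p j ^ β j)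
    (heq : ∀ l : Fin n, C (dg : ℂ) * g * pderiv l f = C (df : ℂ) * f * pderiv l g) :
    ∀ j, β j * dg = α j * df := by
  intro j
  have hsplit (w : ℂ) (γ : Fin m → ℕ) :
      C w * ∏ i, p i ^ γ i = p j ^ γ j * (C w * ∏ i ∈ Finset.univ.erase j, p i ^ γ i) := by
    rw [← Finset.mul_prod_erase _ _ (Finset.mem_univ j)]
    ring
  have hcofactor (w : ℂ) (hw : w ≠ 0) (γ : Fin m → ℕ) :
      ¬p j ∣ C w * ∏ i ∈ Finset.univ.erase j, p i ^ γ i := by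
    refine fun h => ((hp j).dvd_or_dvd h).elim (fun h => ?_) fun h => ?_
    · exact hw (eq_zero_of_prime_dvd_C (hp j) h)
    · exact (hp j).not_dvd_prod_pow (fun i _ => hp i)
        (fun i hi => hnassoc j i (Finset.ne_of_mem_erase hi).symm) γ h
  obtain ⟨l, hl⟩ := exists_not_dvd_pderiv_of_not_isUnit (hp j).ne_zero (hp j).not_isUnit
  have hdvd := (pderiv l).prime_dvd_mul_sub_mul_of_mul_map_eq (hp j)
    (hcofactor u hu α) (hcofactor v hv β) hl (a := α j) (b := β j)
    (by rw [← hsplit, ← hsplit, ← hgdef, ← hfdef]; exact heq l)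
  have hC : C (dg : ℂ) * (β j : MvPolynomial (Fin n) ℂ)
      - C (df : ℂ) * (α j : MvPolynomial (Fin n) ℂ) = C ((dg : ℂ) * β j - df * α j) := by
    simp only [map_sub, map_mul, map_natCast]
  rw [mul_comm, mul_comm (α j)]
  exact_mod_cast sub_eq_zero.1 (eq_zero_of_prime_dvd_C (hp j) (hC ▸ hdvd))

/-- With `g = u·∏ p_j^{α_j}` and `f = v·∏ p_j^{β_j}` (pairwise non-associate
primes `p_j`, positive exponents), both nonzero homogeneous of positive degree, and
`(deg g)·g·∂f/∂z_l = (deg f)·f·∂g/∂z_l` for all `l`, we get `β_j/α_j = deg f/deg g`,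
i.e. `β_j · deg g = α_j · deg f`, for all `j`. -/
theorem stmt1 {n m : ℕ} (u v : ℂ) (hu : u ≠ 0) (hv : v ≠ 0)
    (p : Fin m → MvPolynomial (Fin n) ℂ) (hp : ∀ j, Prime (p j))
    (hnassoc : ∀ i j, i ≠ j → ¬ Associated (p i) (p j))
    (α β : Fin m → ℕ) (hα : ∀ j, 0 < α j) (hβ : ∀ j, 0 < β j)
    (g f : MvPolynomial (Fin n) ℂ) (dg df : ℕ)
    (hgdef : g = C u * ∏ j, p j ^ α j) (hfdef : f = C v * ∏ j, p j ^ β j)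
    (hgh : g.IsHomogeneous dg) (hdg : 0 < dg)
    (hfh : f.IsHomogeneous df) (hdf : 0 < df)
    (heq : ∀ l : Fin n, C (dg : ℂ) * g * pderiv l f = C (df : ℂ) * f * pderiv l g) :
    ∀ j, β j * dg = α j * df :=
  stmt1_general u v hu hv p hp hnassoc α β g f dg df hgdef hfdef heq
end

section
/- Let P: C^n → R, n ≥ 2, be a non-constant plurisubharmonic polynomial without pluriharmonic terms, homogeneous of degree 2k, and homogeneous of degree 2d_j in (z_j, z̄_j) for j = 1,...,l, where 1 ≤ l ≤ n−1, d_j ∈ Z_{>0}, and k − D > 0 with D = d_1+···+d_l. Let d = gcd(d_1,...,d_l,k). Then there exists a plurisubharmonic polynomial Q: C^{n−l} → R without pluriharmonic terms, homogeneous of degree 2k−2D, such that both the holomorphic and anti-holomorphic degree of every monomial of Q are divisible by (k−D)/d, and such that P(z_1,...,z_n) = Q(τ z_{l+1},...,τ z_n) for every z ∈ C^n and every τ ∈ C with τ^{(k−D)/d} = z_1^{d_1/d}···z_l^{d_l/d}. -/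
open Finset
open scoped ComplexConjugate

/-- Multi-index power `z^α = ∏ i, z i ^ α i`. -/
noncomputable def mpow {n : ℕ} (z : Fin n → ℂ) (α : Fin n →₀ ℕ) : ℂ :=
  ∏ i, z i ^ α i

/-- Value of the polynomial `P(z) = ∑_{(α,β)∈J} a_{α,β} z^α z̄^β`. -/
noncomputable def pval {n : ℕ} (J : Finset ((Fin n →₀ ℕ) × (Fin n →₀ ℕ)))
    (a : (Fin n →₀ ℕ) × (Fin n →₀ ℕ) → ℂ) (z : Fin n → ℂ) : ℂ :=
  ∑ p ∈ J, a p * mpow z p.1 * conj (mpow z p.2)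

/-- Levi form `L(P; z, V) = ∑_{i,j} (∂²P/∂z_i∂z̄_j)(z) V_i conj(V_j)` of
`P(z) = ∑_{(α,β)∈J} a_{α,β} z^α z̄^β`, computed termwise via
`∂²(z^α z̄^β)/∂z_i∂z̄_j = α_i β_j z^{α-e_i} z̄^{β-e_j}`. -/
noncomputable def leviForm {n : ℕ} (J : Finset ((Fin n →₀ ℕ) × (Fin n →₀ ℕ)))
    (a : (Fin n →₀ ℕ) × (Fin n →₀ ℕ) → ℂ) (z V : Fin n → ℂ) : ℂ :=
  ∑ p ∈ J, a p * ∑ i, ∑ j,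
    (p.1 i : ℂ) * (p.2 j : ℂ) * mpow z (p.1 - Finsupp.single i 1) *
      conj (mpow z (p.2 - Finsupp.single j 1)) * V i * conj (V j)

/-!
For `j ≤ l` give `z_j` the weight `κ = k - D`, the other head variables `z_i` (`i ≤ l`) the
weight `0` and the tail variables `z_{l+1}, …, z_n` the weight `-d_j`. The two homogeneities
make every monomial `z^α z̄^β` of `P` of total weight `w(α) + w(β) = 0`, so the Levi form of `P`
on the weighted Euler field `V_i = w_i z_i` is `-∑ a_{αβ} w(α)² z^α z̄^β`. This real polynomial
is therefore `≤ 0`; its average over the orbit `z_i ↦ ζ^{w_i} z_i` of a root of unity `ζ` of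
large order is `0` (monomials of nonzero weight average out, the others have coefficient `0`),
so it vanishes, and by linear independence of the monomials `w(α) = 0` whenever `a_{αβ} ≠ 0`.
Hence `κ α_j = d_j |α'|`, `α'` the tail of `α`: a gcd computation makes `|α'|` a multiple of
`κ/d` and the head factor of each monomial the power `τ^{|α'|}`, so `Q` is obtained by merging
the monomials of `P` with equal tail exponents.
-/

section MonomialIndependence

variable {n : ℕ}

lemma mpow_mul (z w : Fin n → ℂ) (α : Fin n →₀ ℕ) : mpow (z * w) α = mpow z α * mpow w α := by
  simp only [mpow, Pi.mul_apply, mul_pow, prod_mul_distrib]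

lemma mpow_add (z : Fin n → ℂ) (α β : Fin n →₀ ℕ) : mpow z (α + β) = mpow z α * mpow z β := by
  simp only [mpow, Finsupp.coe_add, Pi.add_apply, pow_add, prod_mul_distrib]

lemma mpow_single (z : Fin n → ℂ) (i : Fin n) (k : ℕ) :
    mpow z (Finsupp.single i k) = z i ^ k := by
  rw [mpow, prod_eq_single i (fun j _ hj => by simp [Finsupp.single_eq_of_ne hj]) (by simp)]
  simp

lemma mpow_update_one (i : Fin n) (w : ℂ) (α : Fin n →₀ ℕ) :
    mpow (Function.update 1 i w) α = w ^ α i := by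
  rw [mpow, prod_eq_single i (fun j _ hj => by simp [Function.update_of_ne hj]) (by simp)]
  simp

noncomputable def monomialChar (p : (Fin n →₀ ℕ) × (Fin n →₀ ℕ)) : (Fin n → ℂ) →* ℂ where
  toFun z := mpow z p.1 * conj (mpow z p.2)
  map_one' := by simp [mpow]
  map_mul' z w := by simp only [mpow_mul, map_mul]; ring

/-- Evaluate at `2` to compare total degrees and at a root of unity of large order, where
`w̄ = w⁻¹`, to compare the differences. -/
lemma pow_mul_conj_pow_inj {a b a' b' : ℕ}
    (h : ∀ w : ℂ, w ^ a * conj w ^ b = w ^ a' * conj w ^ b') : a = a' ∧ b = b' := by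
  have hsum : a + b = a' + b' := by
    have h2 := h 2
    simp only [map_ofNat, ← pow_add] at h2
    exact Nat.pow_right_injective le_rfl (by exact_mod_cast h2)
  set N := a + b' + a' + b + 1
  have hN : N ≠ 0 := by omega
  have hζ := Complex.isPrimitiveRoot_exp N hN
  set ζ := Complex.exp (2 * Real.pi * Complex.I / N)
  have hζ0 : ζ ≠ 0 := Complex.exp_ne_zero _
  have hconj : conj ζ = ζ⁻¹ := (Complex.inv_eq_conj (hζ.norm'_eq_one hN)).symm
  have hdiff : ζ ^ (a + b') = ζ ^ (a' + b) := by
    have hw := h ζ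
    rw [hconj, inv_pow, inv_pow] at hw
    field_simp at hw
    simpa only [pow_add, mul_comm] using hw
  have := hζ.pow_inj (by omega) (by omega) hdiff
  omega

lemma monomialChar_injective : Function.Injective (monomialChar (n := n)) := by
  intro p q hpq
  have h : ∀ i, p.1 i = q.1 i ∧ p.2 i = q.2 i := fun i => pow_mul_conj_pow_inj fun w => by
    simpa [monomialChar, mpow_update_one, map_pow] using
      DFunLike.congr_fun hpq (Function.update (1 : Fin n → ℂ) i w)
  exact Prod.ext (Finsupp.ext fun i => (h i).1) (Finsupp.ext fun i => (h i).2)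

theorem coeff_eq_zero_of_pval_eq_zero {J : Finset ((Fin n →₀ ℕ) × (Fin n →₀ ℕ))}
    {c : (Fin n →₀ ℕ) × (Fin n →₀ ℕ) → ℂ} (h : ∀ z, pval J c z = 0) : ∀ p ∈ J, c p = 0 := by
  have hli := (linearIndependent_monoidHom (Fin n → ℂ) ℂ).comp monomialChar monomialChar_injective
  refine linearIndependent_iff'.1 hli J c (funext fun z => ?_)
  simpa [pval, monomialChar, mul_assoc] using h z

end MonomialIndependence

section WeightedEuler

variable {n : ℕ}

/-- `∂_V z^α`, the derivative of the monomial `z^α` at `z` in the direction `V`. -/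
noncomputable def mpowDeriv (α : Fin n →₀ ℕ) (z V : Fin n → ℂ) : ℂ :=
  ∑ i, (α i : ℂ) * mpow z (α - Finsupp.single i 1) * V i

lemma leviForm_eq_sum_mpowDeriv (J : Finset ((Fin n →₀ ℕ) × (Fin n →₀ ℕ)))
    (a : (Fin n →₀ ℕ) × (Fin n →₀ ℕ) → ℂ) (z V : Fin n → ℂ) :
    leviForm J a z V = ∑ p ∈ J, a p * (mpowDeriv p.1 z V * conj (mpowDeriv p.2 z V)) := by
  refine sum_congr rfl fun p _ => ?_
  simp only [mpowDeriv, map_sum, map_mul, Complex.conj_natCast, sum_mul_sum]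
  congr 1
  exact sum_congr rfl fun i _ => sum_congr rfl fun j _ => by ring

lemma mul_mpow_tsub_single {z : Fin n → ℂ} {α : Fin n →₀ ℕ} {i : Fin n} (h : α i ≠ 0) :
    z i * mpow z (α - Finsupp.single i 1) = mpow z α := by
  conv_rhs => rw [← tsub_add_cancel_of_le (Finsupp.single_le_iff.2 (Nat.one_le_iff_ne_zero.2 h))]
  rw [mpow_add, mpow_single, pow_one, mul_comm]

lemma weight_eq_sum (w : Fin n → ℤ) (α : Fin n →₀ ℕ) :
    Finsupp.weight w α = ∑ i, (α i : ℤ) * w i := by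
  simp [Finsupp.weight_apply, Finsupp.sum_fintype]

lemma mpowDeriv_weighted_euler (w : Fin n → ℤ) (z : Fin n → ℂ) (α : Fin n →₀ ℕ) :
    mpowDeriv α z (fun i => w i * z i) = Finsupp.weight w α * mpow z α := by
  rw [mpowDeriv, weight_eq_sum, Int.cast_sum, sum_mul]
  refine sum_congr rfl fun i _ => ?_
  by_cases h : α i = 0
  · simp [h]
  · rw [← mul_mpow_tsub_single h]; push_cast; ring

lemma leviForm_weighted_euler (J : Finset ((Fin n →₀ ℕ) × (Fin n →₀ ℕ)))
    (a : (Fin n →₀ ℕ) × (Fin n →₀ ℕ) → ℂ) (w : Fin n → ℤ) (z : Fin n → ℂ)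
    (hw : ∀ p ∈ J, Finsupp.weight w p.1 + Finsupp.weight w p.2 = 0) :
    leviForm J a z (fun i => w i * z i) =
      -pval J (fun p => a p * (Finsupp.weight w p.1 : ℂ) ^ 2) z := by
  rw [leviForm_eq_sum_mpowDeriv, pval, ← sum_neg_distrib]
  refine sum_congr rfl fun p hp => ?_
  have h2 : (Finsupp.weight w p.2 : ℂ) = -Finsupp.weight w p.1 := by
    exact_mod_cast eq_neg_of_add_eq_zero_right (hw p hp)
  simp only [mpowDeriv_weighted_euler, map_mul, map_intCast]
  rw [h2]
  ring

end WeightedEuler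

section WeightedRotation

variable {n : ℕ}

lemma prod_zpow_eq_zpow_sum {ι G₀ : Type*} [CommGroupWithZero G₀] (s : Finset ι) {ζ : G₀}
    (hζ : ζ ≠ 0) (k : ι → ℤ) : ∏ i ∈ s, ζ ^ k i = ζ ^ ∑ i ∈ s, k i := by
  induction s using Finset.cons_induction with
  | empty => simp
  | cons i s hi ih => rw [prod_cons, sum_cons, ih, zpow_add₀ hζ]

noncomputable def weightedRot (ζ : ℂ) (w : Fin n → ℤ) (z : Fin n → ℂ) : Fin n → ℂ :=
  fun i => ζ ^ w i * z i

lemma mpow_weightedRot {ζ : ℂ} (hζ : ζ ≠ 0) (w : Fin n → ℤ) (z : Fin n → ℂ)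
    (α : Fin n →₀ ℕ) :
    mpow (weightedRot ζ w z) α = ζ ^ Finsupp.weight w α * mpow z α := by
  simp only [mpow, weightedRot, mul_pow, prod_mul_distrib, weight_eq_sum,
    ← prod_zpow_eq_zpow_sum _ hζ, zpow_mul, zpow_natCast, mul_comm (α _ : ℤ)]

lemma pval_weightedRot {ζ : ℂ} (hζ : ‖ζ‖ = 1) {J : Finset ((Fin n →₀ ℕ) × (Fin n →₀ ℕ))}
    (c : (Fin n →₀ ℕ) × (Fin n →₀ ℕ) → ℂ) (w : Fin n → ℤ) (z : Fin n → ℂ)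
    (hw : ∀ p ∈ J, Finsupp.weight w p.1 + Finsupp.weight w p.2 = 0) :
    pval J c (weightedRot ζ w z) =
      ∑ p ∈ J, (ζ ^ (2 * Finsupp.weight w p.1)) * (c p * mpow z p.1 * conj (mpow z p.2)) := by
  have hζ0 : ζ ≠ 0 := norm_ne_zero_iff.1 (by rw [hζ]; exact one_ne_zero)
  refine sum_congr rfl fun p hp => ?_
  rw [mpow_weightedRot hζ0, mpow_weightedRot hζ0, map_mul, map_zpow₀,
    ← Complex.inv_eq_conj hζ, inv_zpow', eq_neg_of_add_eq_zero_right (hw p hp), neg_neg,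
    two_mul, zpow_add₀ hζ0]
  ring

lemma sum_pval_weightedRot_eq_zero {ζ : ℂ} {M : ℕ} (hζ : IsPrimitiveRoot ζ M) (hM : M ≠ 0)
    {J : Finset ((Fin n →₀ ℕ) × (Fin n →₀ ℕ))} (c : (Fin n →₀ ℕ) × (Fin n →₀ ℕ) → ℂ)
    (w : Fin n → ℤ) (z : Fin n → ℂ)
    (hw : ∀ p ∈ J, Finsupp.weight w p.1 + Finsupp.weight w p.2 = 0)
    (hlt : ∀ p ∈ J, 2 * |Finsupp.weight w p.1| < M)
    (hc : ∀ p ∈ J, Finsupp.weight w p.1 = 0 → c p = 0) :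
    ∑ r ∈ range M, pval J c (weightedRot (ζ ^ r) w z) = 0 := by
  have hnorm : ∀ r : ℕ, ‖ζ ^ r‖ = 1 := fun r => by rw [norm_pow, hζ.norm'_eq_one hM, one_pow]
  simp only [pval_weightedRot (hnorm _) c w z hw]
  rw [sum_comm]
  refine sum_eq_zero fun p hp => ?_
  rw [← sum_mul]
  by_cases h0 : Finsupp.weight w p.1 = 0
  · simp [hc p hp h0]
  have hne : ζ ^ (2 * Finsupp.weight w p.1) ≠ 1 := by
    rw [Ne, hζ.zpow_eq_one_iff_dvd]
    intro hdvd
    have hle := Int.le_of_dvd (abs_pos.2 (mul_ne_zero two_ne_zero h0)) ((dvd_abs _ _).2 hdvd)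
    rw [abs_mul, abs_two] at hle
    linarith [hlt p hp]
  have hpow : (ζ ^ (2 * Finsupp.weight w p.1)) ^ M = 1 := by
    rw [← zpow_natCast, ← zpow_mul, hζ.zpow_eq_one_iff_dvd]
    exact dvd_mul_left _ _
  have hterm : ∀ r : ℕ, (ζ ^ r) ^ (2 * Finsupp.weight w p.1) =
      (ζ ^ (2 * Finsupp.weight w p.1)) ^ r := fun r => by
    rw [← zpow_natCast ζ r, zpow_comm, zpow_natCast]
  simp only [hterm]
  rw [geom_sum_eq hne, hpow, sub_self, zero_div, zero_mul]

end WeightedRotation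

section Plurisubharmonic

variable {n : ℕ}

lemma conj_pval {J : Finset ((Fin n →₀ ℕ) × (Fin n →₀ ℕ))}
    {c : (Fin n →₀ ℕ) × (Fin n →₀ ℕ) → ℂ} (hsym : ∀ p ∈ J, (p.2, p.1) ∈ J)
    (hc : ∀ p ∈ J, c (p.2, p.1) = conj (c p)) (z : Fin n → ℂ) :
    conj (pval J c z) = pval J c z := by
  rw [pval, map_sum]
  refine sum_nbij' (fun p => (p.2, p.1)) (fun p => (p.2, p.1)) hsym hsym
    (fun _ _ => rfl) (fun _ _ => rfl) fun p hp => ?_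
  simp only [map_mul, Complex.conj_conj, hc p hp]
  ring

lemma pval_eq_zero_of_re_nonpos {J : Finset ((Fin n →₀ ℕ) × (Fin n →₀ ℕ))}
    {c : (Fin n →₀ ℕ) × (Fin n →₀ ℕ) → ℂ} (w : Fin n → ℤ)
    (hw : ∀ p ∈ J, Finsupp.weight w p.1 + Finsupp.weight w p.2 = 0)
    (hc : ∀ p ∈ J, Finsupp.weight w p.1 = 0 → c p = 0)
    (hre : ∀ z, (pval J c z).re ≤ 0) (hreal : ∀ z, conj (pval J c z) = pval J c z)
    (z : Fin n → ℂ) : pval J c z = 0 := by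
  set M := 2 * J.sup (fun p => (Finsupp.weight w p.1).natAbs) + 1
  have hM : M ≠ 0 := by omega
  have hlt : ∀ p ∈ J, 2 * |Finsupp.weight w p.1| < M := fun p hp => by
    have := le_sup (f := fun p => (Finsupp.weight w p.1).natAbs) hp
    rw [Int.abs_eq_natAbs]
    omega
  have hsum := sum_pval_weightedRot_eq_zero (Complex.isPrimitiveRoot_exp M hM) hM c w z hw hlt hc
  have hre0 := (sum_eq_zero_iff_of_nonpos fun r _ => hre _).1
    (by rw [← Complex.re_sum, hsum, Complex.zero_re]) 0 (mem_range.2 (Nat.pos_of_ne_zero hM))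
  have hz : weightedRot (Complex.exp (2 * Real.pi * Complex.I / M) ^ 0) w z = z := by
    funext i
    simp [weightedRot]
  rw [hz] at hre0
  exact Complex.ext hre0 (Complex.conj_eq_iff_im.1 (hreal z))

theorem weight_eq_zero_of_leviForm_nonneg {J : Finset ((Fin n →₀ ℕ) × (Fin n →₀ ℕ))}
    {a : (Fin n →₀ ℕ) × (Fin n →₀ ℕ) → ℂ} (w : Fin n → ℤ)
    (hw : ∀ p ∈ J, Finsupp.weight w p.1 + Finsupp.weight w p.2 = 0)
    (hsym : ∀ p ∈ J, (p.2, p.1) ∈ J)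
    (hherm : ∀ p : (Fin n →₀ ℕ) × (Fin n →₀ ℕ), a (p.2, p.1) = conj (a p))
    (hpsh : ∀ z V : Fin n → ℂ, 0 ≤ (leviForm J a z V).re) :
    ∀ p ∈ J, a p ≠ 0 → Finsupp.weight w p.1 = 0 := by
  set c : (Fin n →₀ ℕ) × (Fin n →₀ ℕ) → ℂ := fun p => a p * (Finsupp.weight w p.1 : ℂ) ^ 2
  have hre : ∀ z, (pval J c z).re ≤ 0 := fun z => by
    have := hpsh z (fun i => w i * z i)
    rw [leviForm_weighted_euler J a w z hw, Complex.neg_re] at this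
    linarith
  have hreal : ∀ z, conj (pval J c z) = pval J c z := by
    refine conj_pval hsym fun p hp => ?_
    have h2 : (Finsupp.weight w p.2 : ℂ) = -Finsupp.weight w p.1 := by
      exact_mod_cast eq_neg_of_add_eq_zero_right (hw p hp)
    simp only [c, hherm, map_mul, map_pow, map_intCast, h2, neg_sq]
  have hzero := pval_eq_zero_of_re_nonpos w hw (fun p _ h => by simp [c, h]) hre hreal
  intro p hp hap
  simpa [c, hap] using coeff_eq_zero_of_pval_eq_zero hzero p hp

end Plurisubharmonic

lemma div_gcd_dvd_of_mul_eq {ι : Type*} (s : Finset ι) (d α : ι → ℕ) {k κ t : ℕ} (hk : 0 < k)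
    (hκ : κ + ∑ j ∈ s, d j = k) (hα : ∀ j ∈ s, κ * α j = d j * t) :
    κ / Nat.gcd (s.gcd d) k ∣ t := by
  have hg : 0 < Nat.gcd (s.gcd d) k := Nat.gcd_pos_of_pos_right _ hk
  have hgκ : Nat.gcd (s.gcd d) k ∣ κ := by
    have hgk := Nat.gcd_dvd_right (s.gcd d) k
    rw [← hκ] at hgk ⊢
    refine (Nat.dvd_add_left (dvd_sum fun j hj => ?_)).1 hgk
    exact (Nat.gcd_dvd_left _ _).trans (Finset.gcd_dvd hj)
  have hdt : κ ∣ s.gcd d * t := by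
    rw [← normalize_eq t, ← Finset.gcd_mul_right]
    exact Finset.dvd_gcd fun j hj => ⟨α j, (hα j hj).symm⟩
  have hkt : κ ∣ k * t := by
    rw [← hκ, add_mul, sum_mul]
    exact dvd_add (dvd_mul_right _ _) (dvd_sum fun j hj => ⟨α j, (hα j hj).symm⟩)
  have hgt : κ ∣ Nat.gcd (s.gcd d) k * t := by
    rw [← Nat.gcd_mul_right]
    exact Nat.dvd_gcd hdt hkt
  obtain ⟨κ', hκ'⟩ := hgκ
  rw [hκ'] at hgt ⊢
  rw [Nat.mul_div_cancel_left _ hg]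
  exact Nat.dvd_of_mul_dvd_mul_left hg hgt

section Tail

variable (l m : ℕ)

noncomputable def tailIndex (γ : Fin (l + m) →₀ ℕ) : Fin m →₀ ℕ :=
  Finsupp.equivFunOnFinite.symm fun i => γ (Fin.natAdd l i)

noncomputable def tailPair (p : (Fin (l + m) →₀ ℕ) × (Fin (l + m) →₀ ℕ)) :
    (Fin m →₀ ℕ) × (Fin m →₀ ℕ) :=
  (tailIndex l m p.1, tailIndex l m p.2)

/-- The coefficients of `Q`. -/
noncomputable def tailCoeff (J : Finset ((Fin (l + m) →₀ ℕ) × (Fin (l + m) →₀ ℕ)))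
    (a : (Fin (l + m) →₀ ℕ) × (Fin (l + m) →₀ ℕ) → ℂ) (q : (Fin m →₀ ℕ) × (Fin m →₀ ℕ)) : ℂ :=
  ∑ p ∈ J with tailPair l m p = q, a p

variable {l m}

@[simp]
lemma tailIndex_apply (γ : Fin (l + m) →₀ ℕ) (i : Fin m) :
    tailIndex l m γ i = γ (Fin.natAdd l i) := rfl

lemma tailIndex_tsub_single (γ : Fin (l + m) →₀ ℕ) (i : Fin m) :
    tailIndex l m (γ - Finsupp.single (Fin.natAdd l i) 1) =
      tailIndex l m γ - Finsupp.single i 1 := by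
  ext i'
  simp [Finsupp.single_apply, Fin.natAdd_inj]

lemma mpow_append_one (z : Fin m → ℂ) (γ : Fin (l + m) →₀ ℕ) :
    mpow (Fin.append (1 : Fin l → ℂ) z) γ = mpow z (tailIndex l m γ) := by
  simp [mpow, Fin.prod_univ_add]

lemma mpowDeriv_append (z V : Fin m → ℂ) (γ : Fin (l + m) →₀ ℕ) :
    mpowDeriv γ (Fin.append (1 : Fin l → ℂ) z) (Fin.append 0 V) =
      mpowDeriv (tailIndex l m γ) z V := by
  simp [mpowDeriv, Fin.sum_univ_add, mpow_append_one, tailIndex_tsub_single]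

lemma mpow_eq_prod_mul_mpow_tail (z : Fin (l + m) → ℂ) (γ : Fin (l + m) →₀ ℕ) :
    mpow z γ = (∏ j, z (Fin.castAdd m j) ^ γ (Fin.castAdd m j)) *
      mpow (fun i => z (Fin.natAdd l i)) (tailIndex l m γ) :=
  Fin.prod_univ_add _

lemma mpow_const_mul (τ : ℂ) (z : Fin m → ℂ) (q : Fin m →₀ ℕ) :
    mpow (fun i => τ * z i) q = τ ^ (∑ i, q i) * mpow z q := by
  simp only [mpow, mul_pow, prod_mul_distrib, prod_pow_eq_pow_sum]

lemma mpow_eq_mpow_tail_of_prod_eq {z : Fin (l + m) → ℂ} {γ : Fin (l + m) →₀ ℕ} {τ : ℂ}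
    (h : ∏ j, z (Fin.castAdd m j) ^ γ (Fin.castAdd m j) = τ ^ ∑ i, γ (Fin.natAdd l i)) :
    mpow z γ = mpow (fun i => τ * z (Fin.natAdd l i)) (tailIndex l m γ) := by
  rw [mpow_eq_prod_mul_mpow_tail, h, mpow_const_mul]
  rfl

lemma sum_image_tailPair_mul (J : Finset ((Fin (l + m) →₀ ℕ) × (Fin (l + m) →₀ ℕ)))
    (a : (Fin (l + m) →₀ ℕ) × (Fin (l + m) →₀ ℕ) → ℂ) (F : (Fin m →₀ ℕ) × (Fin m →₀ ℕ) → ℂ) :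
    ∑ q ∈ J.image (tailPair l m), tailCoeff l m J a q * F q =
      ∑ p ∈ J, a p * F (tailPair l m p) := by
  simp only [tailCoeff, sum_mul]
  rw [← sum_fiberwise_of_maps_to (fun p hp => mem_image_of_mem (tailPair l m) hp)]
  exact sum_congr rfl fun q _ => sum_congr rfl fun p hp => by rw [(mem_filter.1 hp).2]

lemma leviForm_tail (J : Finset ((Fin (l + m) →₀ ℕ) × (Fin (l + m) →₀ ℕ)))
    (a : (Fin (l + m) →₀ ℕ) × (Fin (l + m) →₀ ℕ) → ℂ) (z V : Fin m → ℂ) :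
    leviForm (J.image (tailPair l m)) (tailCoeff l m J a) z V =
      leviForm J a (Fin.append (1 : Fin l → ℂ) z) (Fin.append 0 V) := by
  simp only [leviForm_eq_sum_mpowDeriv, sum_image_tailPair_mul, mpowDeriv_append, tailPair]

lemma pval_eq_pval_tail {J : Finset ((Fin (l + m) →₀ ℕ) × (Fin (l + m) →₀ ℕ))}
    (a : (Fin (l + m) →₀ ℕ) × (Fin (l + m) →₀ ℕ) → ℂ) {z : Fin (l + m) → ℂ} {τ : ℂ}
    (h : ∀ p ∈ J,
      ∏ j, z (Fin.castAdd m j) ^ p.1 (Fin.castAdd m j) = τ ^ ∑ i, p.1 (Fin.natAdd l i) ∧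
      ∏ j, z (Fin.castAdd m j) ^ p.2 (Fin.castAdd m j) = τ ^ ∑ i, p.2 (Fin.natAdd l i)) :
    pval J a z = pval (J.image (tailPair l m)) (tailCoeff l m J a)
      (fun i => τ * z (Fin.natAdd l i)) := by
  simp only [pval, mul_assoc, sum_image_tailPair_mul]
  refine sum_congr rfl fun p hp => ?_
  rw [mpow_eq_mpow_tail_of_prod_eq (h p hp).1, mpow_eq_mpow_tail_of_prod_eq (h p hp).2]
  rfl

lemma tailCoeff_swap {J : Finset ((Fin (l + m) →₀ ℕ) × (Fin (l + m) →₀ ℕ))}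
    {a : (Fin (l + m) →₀ ℕ) × (Fin (l + m) →₀ ℕ) → ℂ} (hsym : ∀ p ∈ J, (p.2, p.1) ∈ J)
    (hherm : ∀ p, a (p.2, p.1) = conj (a p)) (q : (Fin m →₀ ℕ) × (Fin m →₀ ℕ)) :
    tailCoeff l m J a (q.2, q.1) = conj (tailCoeff l m J a q) := by
  rw [tailCoeff, tailCoeff, map_sum]
  refine sum_nbij' (fun p => (p.2, p.1)) (fun p => (p.2, p.1)) ?_ ?_
    (fun _ _ => rfl) (fun _ _ => rfl) fun p _ => hherm (p.2, p.1)
  all_goals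
    intro p hp
    obtain ⟨hpJ, hpq⟩ := mem_filter.1 hp
    simp only [tailPair, Prod.ext_iff] at hpq
    exact mem_filter.2 ⟨hsym p hpJ, Prod.ext hpq.2 hpq.1⟩

end Tail

section Balanced

variable {l m : ℕ}

/-- The head exponents of `γ` are those of `(z_1^{d_1} ⋯ z_l^{d_l})^{s/κ}`, where `s` is the
total tail degree of `γ`. -/
def IsBalanced (κ : ℕ) (d : Fin l → ℕ) (γ : Fin (l + m) →₀ ℕ) : Prop :=
  ∀ j, κ * γ (Fin.castAdd m j) = d j * ∑ i, γ (Fin.natAdd l i)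

def headWeight (κ : ℕ) (d : Fin l → ℕ) (j : Fin l) : Fin (l + m) → ℤ :=
  Fin.append (Pi.single j (κ : ℤ)) fun _ => -(d j : ℤ)

lemma weight_headWeight (κ : ℕ) (d : Fin l → ℕ) (j : Fin l) (γ : Fin (l + m) →₀ ℕ) :
    Finsupp.weight (headWeight κ d j) γ =
      κ * γ (Fin.castAdd m j) - d j * ∑ i, (γ (Fin.natAdd l i) : ℤ) := by
  simp only [headWeight, weight_eq_sum, mul_comm, Fin.sum_univ_add, Fin.append_left,
    Pi.single_apply, ite_mul, zero_mul, sum_ite_eq', mem_univ, ↓reduceIte, Fin.append_right,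
    neg_mul, sum_neg_distrib, mul_sum]
  ring

lemma isBalanced_iff_weight_eq_zero {κ : ℕ} {d : Fin l → ℕ} {γ : Fin (l + m) →₀ ℕ} :
    IsBalanced κ d γ ↔ ∀ j, Finsupp.weight (headWeight κ d j) γ = 0 := by
  simp only [IsBalanced, weight_headWeight, sub_eq_zero]
  exact forall_congr' fun j => by exact_mod_cast Iff.rfl

lemma IsBalanced.eq_zero {κ : ℕ} {d : Fin l → ℕ} {γ : Fin (l + m) →₀ ℕ} (h : IsBalanced κ d γ)
    (hκ : 0 < κ) (htail : tailIndex l m γ = 0) : γ = 0 := by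
  have htail' : ∀ i, γ (Fin.natAdd l i) = 0 := fun i => DFunLike.congr_fun htail i
  ext i
  refine Fin.addCases (fun j => ?_) htail' i
  simpa [htail', hκ.ne'] using h j

lemma IsBalanced.div_gcd_dvd {k : ℕ} {d : Fin l → ℕ} {γ : Fin (l + m) →₀ ℕ}
    (h : IsBalanced (k - ∑ j, d j) d γ) (hk : ∑ j, d j < k) :
    (k - ∑ j, d j) / Nat.gcd (univ.gcd d) k ∣ ∑ i, γ (Fin.natAdd l i) :=
  div_gcd_dvd_of_mul_eq univ d _ (by omega) (by omega) fun j _ => h j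

lemma IsBalanced.prod_eq_pow {κ g : ℕ} {d : Fin l → ℕ} {γ : Fin (l + m) →₀ ℕ}
    (h : IsBalanced κ d γ) (hκ : 0 < κ) (hgκ : g ∣ κ) (hgd : ∀ j, g ∣ d j)
    (hdvd : κ / g ∣ ∑ i, γ (Fin.natAdd l i)) {z : Fin (l + m) → ℂ} {τ : ℂ}
    (hτ : τ ^ (κ / g) = ∏ j, z (Fin.castAdd m j) ^ (d j / g)) :
    ∏ j, z (Fin.castAdd m j) ^ γ (Fin.castAdd m j) = τ ^ ∑ i, γ (Fin.natAdd l i) := by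
  obtain ⟨e, he⟩ := hdvd
  have hexp : ∀ j, γ (Fin.castAdd m j) = d j / g * e := fun j => by
    refine Nat.eq_of_mul_eq_mul_left hκ ?_
    rw [h j, he, ← mul_assoc, ← Nat.mul_div_assoc _ hgκ, ← mul_assoc,
      ← Nat.mul_div_assoc _ (hgd j), mul_comm (d j)]
  simp only [hexp, pow_mul, prod_pow, ← hτ, he]

end Balanced

section Support

variable {n : ℕ} {J : Finset ((Fin n →₀ ℕ) × (Fin n →₀ ℕ))}
  {a : (Fin n →₀ ℕ) × (Fin n →₀ ℕ) → ℂ}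

lemma pval_filter_ne_zero (z : Fin n → ℂ) : pval (J.filter fun p => a p ≠ 0) a z = pval J a z :=
  sum_filter_of_ne fun _ _ h => left_ne_zero_of_mul (left_ne_zero_of_mul h)

lemma leviForm_filter_ne_zero (z V : Fin n → ℂ) :
    leviForm (J.filter fun p => a p ≠ 0) a z V = leviForm J a z V :=
  sum_filter_of_ne fun _ _ h => left_ne_zero_of_mul h

lemma swap_mem_filter_ne_zero (hsym : ∀ p ∈ J, (p.2, p.1) ∈ J)
    (hherm : ∀ p : (Fin n →₀ ℕ) × (Fin n →₀ ℕ), a (p.2, p.1) = conj (a p)) :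
    ∀ p ∈ J.filter (fun p => a p ≠ 0), (p.2, p.1) ∈ J.filter (fun p => a p ≠ 0) := by
  intro p hp
  obtain ⟨hpJ, hpa⟩ := mem_filter.1 hp
  exact mem_filter.2 ⟨hsym p hpJ, by rwa [hherm, map_ne_zero]⟩

end Support

section Reduction

variable {l m k : ℕ} {d : Fin l → ℕ}

lemma sum_tail_add_sum_tail {p : (Fin (l + m) →₀ ℕ) × (Fin (l + m) →₀ ℕ)}
    (hdeg : (∑ i, p.1 i) + (∑ i, p.2 i) = 2 * k)
    (hsep : ∀ j, p.1 (Fin.castAdd m j) + p.2 (Fin.castAdd m j) = 2 * d j) :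
    ∑ i, p.1 (Fin.natAdd l i) + ∑ i, p.2 (Fin.natAdd l i) = 2 * k - 2 * ∑ j, d j := by
  have hhead : ∑ j, p.1 (Fin.castAdd m j) + ∑ j, p.2 (Fin.castAdd m j) = 2 * ∑ j, d j := by
    rw [← sum_add_distrib, mul_sum]
    exact sum_congr rfl fun j _ => hsep j
  rw [Fin.sum_univ_add, Fin.sum_univ_add] at hdeg
  omega

theorem isBalanced_of_coeff_ne_zero {J : Finset ((Fin (l + m) →₀ ℕ) × (Fin (l + m) →₀ ℕ))}
    {a : (Fin (l + m) →₀ ℕ) × (Fin (l + m) →₀ ℕ) → ℂ}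
    (hdeg : ∀ p ∈ J, (∑ i, p.1 i) + (∑ i, p.2 i) = 2 * k)
    (hsep : ∀ p ∈ J, ∀ j : Fin l,
      p.1 (Fin.castAdd m j) + p.2 (Fin.castAdd m j) = 2 * d j)
    (hsym : ∀ p ∈ J, (p.2, p.1) ∈ J)
    (hherm : ∀ p : (Fin (l + m) →₀ ℕ) × (Fin (l + m) →₀ ℕ), a (p.2, p.1) = conj (a p))
    (hpsh : ∀ z V : Fin (l + m) → ℂ, 0 ≤ (leviForm J a z V).re)
    {p : (Fin (l + m) →₀ ℕ) × (Fin (l + m) →₀ ℕ)} (hp : p ∈ J) (ha : a p ≠ 0) :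
    IsBalanced (k - ∑ j, d j) d p.1 ∧ IsBalanced (k - ∑ j, d j) d p.2 := by
  have hw : ∀ j, ∀ p ∈ J, Finsupp.weight (headWeight (k - ∑ j, d j) d j) p.1 +
      Finsupp.weight (headWeight (k - ∑ j, d j) d j) p.2 = 0 := by
    intro j p hp
    have hhead : (p.1 (Fin.castAdd m j) : ℤ) + p.2 (Fin.castAdd m j) = 2 * d j := by
      exact_mod_cast hsep p hp j
    have htail : ∑ i, (p.1 (Fin.natAdd l i) : ℤ) + ∑ i, (p.2 (Fin.natAdd l i) : ℤ) =
        2 * ((k - ∑ j, d j : ℕ) : ℤ) := by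
      exact_mod_cast (sum_tail_add_sum_tail (hdeg p hp) (hsep p hp)).trans (by omega)
    rw [weight_headWeight, weight_headWeight]
    linear_combination ((k - ∑ j, d j : ℕ) : ℤ) * hhead - (d j : ℤ) * htail
  have h1 := fun j => weight_eq_zero_of_leviForm_nonneg _ (hw j) hsym hherm hpsh p hp ha
  refine ⟨isBalanced_iff_weight_eq_zero.2 h1, isBalanced_iff_weight_eq_zero.2 fun j => ?_⟩
  linarith [hw j p hp, h1 j]

end Reduction

theorem stmt13_general {l m k : ℕ}
    (J : Finset ((Fin (l + m) →₀ ℕ) × (Fin (l + m) →₀ ℕ)))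
    (a : (Fin (l + m) →₀ ℕ) × (Fin (l + m) →₀ ℕ) → ℂ)
    (d : Fin l → ℕ) (hkD : ∑ j, d j < k)
    (hdeg : ∀ p ∈ J, (∑ i, p.1 i) + (∑ i, p.2 i) = 2 * k)
    (hsep : ∀ p ∈ J, ∀ j : Fin l,
      p.1 (Fin.castAdd m j) + p.2 (Fin.castAdd m j) = 2 * d j)
    (hnp : ∀ p ∈ J, p.1 ≠ 0 ∧ p.2 ≠ 0)
    (hsym : ∀ p ∈ J, (p.2, p.1) ∈ J)
    (hherm : ∀ p : (Fin (l + m) →₀ ℕ) × (Fin (l + m) →₀ ℕ), a (p.2, p.1) = conj (a p))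
    (hpsh : ∀ z V : Fin (l + m) → ℂ, 0 ≤ (leviForm J a z V).re)
    (dG : ℕ) (hdG : dG = Nat.gcd (Finset.univ.gcd d) k) :
    ∃ (J' : Finset ((Fin m →₀ ℕ) × (Fin m →₀ ℕ)))
      (b : (Fin m →₀ ℕ) × (Fin m →₀ ℕ) → ℂ),
      (∀ z V : Fin m → ℂ, 0 ≤ (leviForm J' b z V).re) ∧
      (∀ p ∈ J', (p.2, p.1) ∈ J') ∧
      (∀ p : (Fin m →₀ ℕ) × (Fin m →₀ ℕ), b (p.2, p.1) = conj (b p)) ∧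
      (∀ p ∈ J', p.1 ≠ 0 ∧ p.2 ≠ 0) ∧
      (∀ p ∈ J', (∑ i, p.1 i) + (∑ i, p.2 i) = 2 * k - 2 * ∑ j, d j) ∧
      (∀ p ∈ J', (k - ∑ j, d j) / dG ∣ ∑ i, p.1 i ∧ (k - ∑ j, d j) / dG ∣ ∑ i, p.2 i) ∧
      ∀ z : Fin (l + m) → ℂ, ∀ τ : ℂ,
        τ ^ ((k - ∑ j, d j) / dG) = ∏ j, z (Fin.castAdd m j) ^ (d j / dG) →
        pval J a z = pval J' b (fun i => τ * z (Fin.natAdd l i)) := by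
  subst hdG
  set J₀ := J.filter fun p => a p ≠ 0
  have hκ : 0 < k - ∑ j, d j := by omega
  have hbal : ∀ p ∈ J₀, IsBalanced (k - ∑ j, d j) d p.1 ∧ IsBalanced (k - ∑ j, d j) d p.2 :=
    fun p hp => isBalanced_of_coeff_ne_zero hdeg hsep hsym hherm hpsh
      (mem_filter.1 hp).1 (mem_filter.1 hp).2
  have hsym₀ := swap_mem_filter_ne_zero hsym hherm
  have hgd : ∀ j, Nat.gcd (univ.gcd d) k ∣ d j :=
    fun j => (Nat.gcd_dvd_left _ _).trans (Finset.gcd_dvd (mem_univ j))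
  have hgκ : Nat.gcd (univ.gcd d) k ∣ k - ∑ j, d j :=
    Nat.dvd_sub (Nat.gcd_dvd_right _ _) (dvd_sum fun j _ => hgd j)
  refine ⟨J₀.image (tailPair l m), tailCoeff l m J₀ a, fun z V => ?_,
    forall_mem_image.2 fun p hp => mem_image_of_mem _ (hsym₀ p hp), tailCoeff_swap hsym₀ hherm,
    forall_mem_image.2 fun p hp => ?_, forall_mem_image.2 fun p hp => ?_,
    forall_mem_image.2 fun p hp => ?_, fun z τ hτ => ?_⟩
  · rw [leviForm_tail, leviForm_filter_ne_zero]
    exact hpsh _ _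
  · have hnp' := hnp p (mem_filter.1 hp).1
    exact ⟨fun h => hnp'.1 ((hbal p hp).1.eq_zero hκ h),
      fun h => hnp'.2 ((hbal p hp).2.eq_zero hκ h)⟩
  · exact sum_tail_add_sum_tail (hdeg p (mem_filter.1 hp).1) (hsep p (mem_filter.1 hp).1)
  · exact ⟨(hbal p hp).1.div_gcd_dvd hkD, (hbal p hp).2.div_gcd_dvd hkD⟩
  · rw [← pval_filter_ne_zero, pval_eq_pval_tail]
    exact fun p hp => ⟨(hbal p hp).1.prod_eq_pow hκ hgκ hgd ((hbal p hp).1.div_gcd_dvd hkD) hτ,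
      (hbal p hp).2.prod_eq_pow hκ hgκ hgd ((hbal p hp).2.div_gcd_dvd hkD) hτ⟩

/-- let `P : ℂⁿ → ℝ` (`n = l + m`, `1 ≤ l`, `1 ≤ m`) be a non-constant
plurisubharmonic polynomial without pluriharmonic terms, homogeneous of degree `2k`, and
homogeneous of degree `2d_j > 0` in `(z_j, z̄_j)` for `j = 1,…,l`, with `D = d_1+⋯+d_l < k`
and `d = gcd(d_1,…,d_l,k)`.  Then there is a plurisubharmonic polynomial
`Q : ℂ^{n−l} → ℝ` without pluriharmonic terms, homogeneous of degree `2k−2D`, whose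
monomials all have holomorphic and anti-holomorphic degree divisible by `(k−D)/d`, such
that `P(z) = Q(τ z_{l+1},…,τ z_n)` whenever `τ^{(k−D)/d} = z_1^{d_1/d} ⋯ z_l^{d_l/d}`. -/
theorem stmt13 {l m k : ℕ} (hl : 1 ≤ l) (hm : 1 ≤ m)
    (J : Finset ((Fin (l + m) →₀ ℕ) × (Fin (l + m) →₀ ℕ)))
    (a : (Fin (l + m) →₀ ℕ) × (Fin (l + m) →₀ ℕ) → ℂ)
    (d : Fin l → ℕ) (hd : ∀ j, 0 < d j) (hkD : ∑ j, d j < k)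
    (hdeg : ∀ p ∈ J, (∑ i, p.1 i) + (∑ i, p.2 i) = 2 * k)
    (hsep : ∀ p ∈ J, ∀ j : Fin l,
      p.1 (Fin.castAdd m j) + p.2 (Fin.castAdd m j) = 2 * d j)
    (hnp : ∀ p ∈ J, p.1 ≠ 0 ∧ p.2 ≠ 0)
    (hsym : ∀ p ∈ J, (p.2, p.1) ∈ J)
    (hherm : ∀ p : (Fin (l + m) →₀ ℕ) × (Fin (l + m) →₀ ℕ), a (p.2, p.1) = conj (a p))
    (hpsh : ∀ z V : Fin (l + m) → ℂ, 0 ≤ (leviForm J a z V).re)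
    (hnc : ∃ z w : Fin (l + m) → ℂ, pval J a z ≠ pval J a w)
    (dG : ℕ) (hdG : dG = Nat.gcd (Finset.univ.gcd d) k) :
    ∃ (J' : Finset ((Fin m →₀ ℕ) × (Fin m →₀ ℕ)))
      (b : (Fin m →₀ ℕ) × (Fin m →₀ ℕ) → ℂ),
      (∀ z V : Fin m → ℂ, 0 ≤ (leviForm J' b z V).re) ∧
      (∀ p ∈ J', (p.2, p.1) ∈ J') ∧
      (∀ p : (Fin m →₀ ℕ) × (Fin m →₀ ℕ), b (p.2, p.1) = conj (b p)) ∧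
      (∀ p ∈ J', p.1 ≠ 0 ∧ p.2 ≠ 0) ∧
      (∀ p ∈ J', (∑ i, p.1 i) + (∑ i, p.2 i) = 2 * k - 2 * ∑ j, d j) ∧
      (∀ p ∈ J', (k - ∑ j, d j) / dG ∣ ∑ i, p.1 i ∧ (k - ∑ j, d j) / dG ∣ ∑ i, p.2 i) ∧
      ∀ z : Fin (l + m) → ℂ, ∀ τ : ℂ,
        τ ^ ((k - ∑ j, d j) / dG) = ∏ j, z (Fin.castAdd m j) ^ (d j / dG) →
        pval J a z = pval J' b (fun i => τ * z (Fin.natAdd l i)) :=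
  stmt13_general J a d hkD hdeg hsep hnp hsym hherm hpsh dG hdG
end

section
/- Let P: C^n → R be a non-constant plurisubharmonic polynomial without pluriharmonic terms, homogeneous of degree 2k, and homogeneous of degree 2d_j > 0 in (z_j, z̄_j) for j = 1,...,l, with 1 ≤ l ≤ n−1 and k − D > 0 where D = d_1+···+d_l. Then, away from the coordinate hyperplanes, P is pluriharmonic along the level sets of G: C^n → C^{n−l}, G(z_1,...,z_n) = z_1^{d_1}···z_l^{d_l}·(z_{l+1}^{k−D},...,z_n^{k−D}). That is, for every z with all coordinates nonzero and every vector V in the kernel of the Jacobian G'(z), the Levi form L(P;z,V) = 0. -/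
open Finset
open scoped ComplexConjugate

/-! Write `V = μ · z`. The map `G` is invariant under the torus action
`z_j ↦ e^{E t_j} z_j`, `z_{l+i} ↦ e^{-∑ d_j t_j} z_{l+i}` (`E = k - D`), so every `V` in the
kernel of `G'(z)` is an infinitesimal generator `μ = ∑ c_j e_j` of that action. Along such a `V`
the monomial `a_{αβ} z^α z̄^β` contributes `a_{αβ} ⟨μ,α⟩ conj⟨μ,β⟩ z^α z̄^β` to the Levi form.
The degree conditions say `⟨e_j, α + β⟩ = 0`, so rotating `z` and `V` by the compact torus
multiplies this contribution by the character of weight `⟨e_j, α - β⟩`. Averaging over a large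
finite subgroup kills every term with a nontrivial character, and the remaining terms have
`⟨e_j, α⟩ = 0`, hence vanish. The average of the nonnegative numbers `Re L` is therefore `0`, so
`Re L(P; z, V) = 0`, and `L(P; z, V)` is real because `P` is. -/

section Monomials

variable {n : ℕ}

lemma mpow_mul_s14 (z u : Fin n → ℂ) (γ : Fin n →₀ ℕ) :
    mpow (fun i => z i * u i) γ = mpow z γ * mpow u γ := by
  simp only [mpow, mul_pow, prod_mul_distrib]

lemma mpow_sub_single (z : Fin n → ℂ) (γ : Fin n →₀ ℕ) (i : Fin n) :
    mpow z (γ - Finsupp.single i 1) = z i ^ (γ i - 1) * ∏ j ∈ univ.erase i, z j ^ γ j := by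
  rw [mpow, ← mul_prod_erase univ _ (mem_univ i)]
  congr 1
  · simp
  · refine prod_congr rfl fun j hj => ?_
    simp [(ne_of_mem_erase hj).symm]

lemma natCast_mul_mpow_sub_single_mul (z : Fin n → ℂ) (γ : Fin n →₀ ℕ) (i : Fin n) :
    (γ i : ℂ) * mpow z (γ - Finsupp.single i 1) * z i = γ i * mpow z γ := by
  rcases eq_or_ne (γ i) 0 with h | h
  · simp [h]
  rw [mpow_sub_single, mpow, ← mul_prod_erase univ _ (mem_univ i), ← pow_sub_one_mul h]
  ring

noncomputable def mpowFDeriv (z : Fin n → ℂ) (γ : Fin n →₀ ℕ) : (Fin n → ℂ) →L[ℂ] ℂ :=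
  ∑ i, ((γ i : ℂ) * mpow z (γ - Finsupp.single i 1)) • ContinuousLinearMap.proj i

lemma mpowFDeriv_apply (z : Fin n → ℂ) (γ : Fin n →₀ ℕ) (V : Fin n → ℂ) :
    mpowFDeriv z γ V = ∑ i, (γ i : ℂ) * mpow z (γ - Finsupp.single i 1) * V i := by
  simp [mpowFDeriv]

lemma hasFDerivAt_mpow (z : Fin n → ℂ) (γ : Fin n →₀ ℕ) :
    HasFDerivAt (fun w => mpow w γ) (mpowFDeriv z γ) z := by
  refine (HasFDerivAt.finsetProd (u := univ) (g := fun i (w : Fin n → ℂ) => w i ^ γ i)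
    fun i _ => (hasDerivAt_pow (γ i) (z i)).comp_hasFDerivAt z (hasFDerivAt_apply i z)).congr_fderiv
    (Finset.sum_congr rfl fun i _ => ?_)
  rw [mpow_sub_single, smul_smul]
  ring_nf

lemma mpowFDeriv_mul_self (z μ : Fin n → ℂ) (γ : Fin n →₀ ℕ) :
    mpowFDeriv z γ (fun i => μ i * z i) = (∑ i, μ i * γ i) * mpow z γ := by
  rw [mpowFDeriv_apply, sum_mul]
  refine sum_congr rfl fun i _ => ?_
  rw [← mul_assoc, mul_comm _ (μ i), mul_assoc (μ i), natCast_mul_mpow_sub_single_mul]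
  ring

end Monomials

section LeviForm

variable {n : ℕ} (J : Finset ((Fin n →₀ ℕ) × (Fin n →₀ ℕ)))
  (a : (Fin n →₀ ℕ) × (Fin n →₀ ℕ) → ℂ)

lemma leviForm_eq_sum_mpowFDeriv (z V : Fin n → ℂ) :
    leviForm J a z V = ∑ p ∈ J, a p * (mpowFDeriv z p.1 V * conj (mpowFDeriv z p.2 V)) := by
  refine sum_congr rfl fun p _ => ?_
  rw [mpowFDeriv_apply, mpowFDeriv_apply, map_sum, sum_mul_sum]
  congr 1
  refine sum_congr rfl fun i _ => sum_congr rfl fun j _ => ?_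
  simp only [map_mul, Complex.conj_natCast]
  ring

lemma conj_leviForm (hsym : ∀ p ∈ J, (p.2, p.1) ∈ J)
    (hherm : ∀ p : (Fin n →₀ ℕ) × (Fin n →₀ ℕ), a (p.2, p.1) = conj (a p))
    (z V : Fin n → ℂ) :
    conj (leviForm J a z V) = leviForm J a z V := by
  rw [leviForm_eq_sum_mpowFDeriv, map_sum]
  refine sum_nbij' Prod.swap Prod.swap hsym hsym (fun _ _ => rfl) (fun _ _ => rfl) fun p _ => ?_
  simp only [map_mul, Complex.conj_conj, Prod.swap, hherm]
  ring

lemma leviForm_mul_self (z μ : Fin n → ℂ) :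
    leviForm J a z (fun i => μ i * z i) = ∑ p ∈ J,
      a p * ((∑ i, μ i * p.1 i) * conj (∑ i, μ i * p.2 i)) * (mpow z p.1 * conj (mpow z p.2)) := by
  rw [leviForm_eq_sum_mpowFDeriv]
  refine sum_congr rfl fun p _ => ?_
  rw [mpowFDeriv_mul_self, mpowFDeriv_mul_self, map_mul]
  ring

end LeviForm

lemma sum_prod_pow_eq_zero {l N : ℕ} (x : Fin l → ℂ) (hx : ∀ j, x j ^ N = 1)
    (hne : ∃ j, x j ≠ 1) : ∑ s : Fin l → Fin N, ∏ j, x j ^ (s j : ℕ) = 0 := by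
  obtain ⟨j, hj⟩ := hne
  rw [← Fintype.prod_sum (fun j (r : Fin N) => x j ^ (r : ℕ))]
  refine prod_eq_zero (mem_univ j) ?_
  rw [Fin.sum_univ_eq_sum_range (x j ^ ·), geom_sum_eq hj, hx, sub_self, zero_div]

section Torus

open Complex

variable {n l : ℕ} (J : Finset ((Fin n →₀ ℕ) × (Fin n →₀ ℕ)))
  (a : (Fin n →₀ ℕ) × (Fin n →₀ ℕ) → ℂ)

def weight (e : Fin n → ℤ) (γ : Fin n →₀ ℕ) : ℤ :=
  ∑ i, e i * γ i

/-- The action of the complex torus `(ℂ/2πiℤ)^l` with weights `e j`; purely imaginary `t`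
form the compact torus. -/
noncomputable def torusAct (e : Fin l → Fin n → ℤ) (t : Fin l → ℂ) (z : Fin n → ℂ) :
    Fin n → ℂ :=
  fun i => exp (∑ j, t j * e j i) * z i

lemma sum_mul_natCast_eq_sum_weight (e : Fin l → Fin n → ℤ) (c : Fin l → ℂ)
    (γ : Fin n →₀ ℕ) :
    ∑ i, (∑ j, c j * e j i) * γ i = ∑ j, c j * weight (e j) γ := by
  simp only [weight, sum_mul, mul_sum, Int.cast_sum, Int.cast_mul, Int.cast_natCast, mul_assoc]
  exact sum_comm

lemma mpow_torusAct (e : Fin l → Fin n → ℤ) (t : Fin l → ℂ) (z : Fin n → ℂ)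
    (γ : Fin n →₀ ℕ) :
    mpow (torusAct e t z) γ = exp (∑ j, t j * weight (e j) γ) * mpow z γ := by
  have hcomm : torusAct e t z = fun i => z i * exp (∑ j, t j * e j i) :=
    funext fun i => mul_comm _ _
  rw [hcomm, mpow_mul_s14, mul_comm, ← sum_mul_natCast_eq_sum_weight, exp_sum]
  simp only [mpow, mul_comm _ (γ _ : ℂ), exp_nat_mul]

lemma leviForm_torusAct (e : Fin l → Fin n → ℤ) (t c : Fin l → ℂ)
    (ht : ∀ j, conj (t j) = -t j) (z : Fin n → ℂ) :
    leviForm J a (torusAct e t z) (fun i => (∑ j, c j * e j i) * torusAct e t z i) =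
      ∑ p ∈ J, a p * ((∑ j, c j * weight (e j) p.1) * conj (∑ j, c j * weight (e j) p.2)) *
        (mpow z p.1 * conj (mpow z p.2)) *
          exp (∑ j, t j * (weight (e j) p.1 - weight (e j) p.2 : ℤ)) := by
  rw [leviForm_mul_self]
  refine sum_congr rfl fun p _ => ?_
  have hconj : conj (exp (∑ j, t j * weight (e j) p.2)) = exp (-∑ j, t j * weight (e j) p.2) := by
    simp [← exp_conj, ht]
  rw [sum_mul_natCast_eq_sum_weight, sum_mul_natCast_eq_sum_weight, mpow_torusAct,
    mpow_torusAct, map_mul, hconj]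
  push_cast
  simp only [mul_sub, sum_sub_distrib]
  rw [sub_eq_add_neg, exp_add]
  ring

/-- The points `torusAct e (rootsOfUnityAngle N s) z`, `s ∈ (ℤ/N)^l`, form an orbit of a finite
subgroup of the compact torus. -/
noncomputable def rootsOfUnityAngle (N : ℕ) (s : Fin l → Fin N) : Fin l → ℂ :=
  fun j => (s j : ℕ) * (2 * Real.pi * I / N)

lemma sum_leviForm_torusAct_eq_zero (e : Fin l → Fin n → ℤ)
    (he : ∀ p ∈ J, ∀ j, weight (e j) p.1 + weight (e j) p.2 = 0) (z : Fin n → ℂ)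
    (c : Fin l → ℂ) {N : ℕ} [NeZero N]
    (hN : ∀ p ∈ J, ∀ j, (weight (e j) p.1 - weight (e j) p.2).natAbs < N) :
    ∑ s, leviForm J a (torusAct e (rootsOfUnityAngle N s) z)
      (fun i => (∑ j, c j * e j i) * torusAct e (rootsOfUnityAngle N s) z i) = 0 := by
  set ζ := exp (2 * Real.pi * I / N)
  have hζ : IsPrimitiveRoot ζ N := isPrimitiveRoot_exp N (NeZero.ne N)
  have ht : ∀ (s : Fin l → Fin N) j, conj (rootsOfUnityAngle N s j) = -rootsOfUnityAngle N s j := fun s j => by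
    simp [rootsOfUnityAngle, map_div₀, map_ofNat]
    ring
  have hphase : ∀ (s : Fin l → Fin N) (k : Fin l → ℤ),
      exp (∑ j, rootsOfUnityAngle N s j * k j) = ∏ j, (ζ ^ k j) ^ (s j : ℕ) := fun s k => by
    rw [exp_sum]
    refine prod_congr rfl fun j _ => ?_
    rw [← exp_int_mul, ← exp_nat_mul, rootsOfUnityAngle]
    ring_nf
  rw [sum_congr rfl fun s _ => leviForm_torusAct J a e _ c (ht s) z]
  simp_rw [hphase]
  rw [sum_comm]
  refine sum_eq_zero fun p hp => ?_
  rw [← mul_sum]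
  by_cases h : ∀ j, ζ ^ (weight (e j) p.1 - weight (e j) p.2) = 1
  · have hw : ∀ j, (weight (e j) p.1 : ℂ) = 0 := fun j => by
      have h1 := Int.eq_zero_of_abs_lt_dvd ((hζ.zpow_eq_one_iff_dvd _).1 (h j))
        (by rw [Int.abs_eq_natAbs]; exact_mod_cast hN p hp j)
      have h2 := he p hp j
      exact_mod_cast (by omega : weight (e j) p.1 = 0)
    simp [hw]
  · refine mul_eq_zero_of_right _ (sum_prod_pow_eq_zero _ (fun j => ?_) (not_forall.1 h))
    rw [← zpow_natCast, ← zpow_mul, mul_comm, zpow_mul, zpow_natCast, hζ.pow_eq_one, one_zpow]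

/-- A plurisubharmonic real polynomial whose monomials all have weight `0` under the radial part
of a torus action is pluriharmonic along the orbits of the complexified action. -/
theorem leviForm_eq_zero_of_weight_add_eq_zero (hsym : ∀ p ∈ J, (p.2, p.1) ∈ J)
    (hherm : ∀ p : (Fin n →₀ ℕ) × (Fin n →₀ ℕ), a (p.2, p.1) = conj (a p))
    (hpsh : ∀ z V : Fin n → ℂ, 0 ≤ (leviForm J a z V).re) (e : Fin l → Fin n → ℤ)
    (he : ∀ p ∈ J, ∀ j, weight (e j) p.1 + weight (e j) p.2 = 0) (z : Fin n → ℂ)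
    (c : Fin l → ℂ) :
    leviForm J a z (fun i => (∑ j, c j * e j i) * z i) = 0 := by
  set M := ∑ p ∈ J, ∑ j, (weight (e j) p.1 - weight (e j) p.2).natAbs
  have hM : ∀ p ∈ J, ∀ j, (weight (e j) p.1 - weight (e j) p.2).natAbs < M + 1 := fun p hp j =>
    Nat.lt_succ_of_le <| (single_le_sum (fun _ _ => Nat.zero_le _) (mem_univ j)).trans
      (single_le_sum (f := fun p => ∑ j, (weight (e j) p.1 - weight (e j) p.2).natAbs)
        (fun _ _ => Nat.zero_le _) hp)
  have hsum := congrArg re (sum_leviForm_torusAct_eq_zero J a e he z c hM)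
  rw [re_sum, zero_re, sum_eq_zero_iff_of_nonneg fun s _ => hpsh _ _] at hsum
  have hz : torusAct e (rootsOfUnityAngle (M + 1) 0) z = z := funext fun i => by
    simp [torusAct, rootsOfUnityAngle]
  have hre := hsum 0 (mem_univ _)
  rw [hz] at hre
  exact Complex.ext hre (conj_eq_iff_im.1 (conj_leviForm J a hsym hherm z _))

end Torus

lemma sum_div_mul_eq_zero_of_fderiv_mpow_eq_zero {n : ℕ} {ι : Type*} [Fintype ι]
    (γ : ι → Fin n →₀ ℕ) {z V : Fin n → ℂ} (hz : ∀ r, z r ≠ 0)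
    (hV : fderiv ℂ (fun w i => mpow w (γ i)) z V = 0) (i : ι) :
    ∑ r, V r / z r * γ i r = 0 := by
  have hG : HasFDerivAt (fun w i => mpow w (γ i))
      (ContinuousLinearMap.pi fun i => mpowFDeriv z (γ i)) z :=
    hasFDerivAt_pi.2 fun i => hasFDerivAt_mpow z (γ i)
  have h : mpowFDeriv z (γ i) V = 0 := congrFun (hG.fderiv ▸ hV) i
  have hVz : V = fun r => V r / z r * z r := funext fun r => (div_mul_cancel₀ _ (hz r)).symm
  rw [hVz, mpowFDeriv_mul_self] at h
  exact (mul_eq_zero.1 h).resolve_right (prod_ne_zero_iff.2 fun r _ => pow_ne_zero _ (hz r))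

section Fibres

variable {l m : ℕ} (d : Fin l → ℕ) (E : ℕ)

noncomputable def fiberExponent (i : Fin m) : Fin (l + m) →₀ ℕ :=
  Finsupp.equivFunOnFinite.symm (Fin.append d (Pi.single i E))

/-- The weights of the torus action `z_j ↦ e^{E t_j} z_j`, `z_{l+i} ↦ e^{-∑ d_j t_j} z_{l+i}`,
which leaves every `z_1^{d_1} ⋯ z_l^{d_l} z_{l+i}^E` invariant. -/
def fiberWeight (j : Fin l) : Fin (l + m) → ℤ :=
  Fin.append (Pi.single j (E : ℤ)) fun _ => -(d j : ℤ)

lemma mpow_fiberExponent (z : Fin (l + m) → ℂ) (i : Fin m) :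
    mpow z (fiberExponent d E i) = (∏ j, z (Fin.castAdd m j) ^ d j) * z (Fin.natAdd l i) ^ E := by
  simp [mpow, fiberExponent, Fin.prod_univ_add, Pi.single_apply, pow_ite]

lemma weight_fiberWeight (j : Fin l) (γ : Fin (l + m) →₀ ℕ) :
    weight (fiberWeight (m := m) d E j) γ =
      E * γ (Fin.castAdd m j) - d j * ∑ i, γ (Fin.natAdd l i) := by
  simp [weight, fiberWeight, Fin.sum_univ_add, Pi.single_apply, mul_sum, sub_eq_add_neg]

lemma exists_eq_torus_direction_of_fderiv_eq_zero (hE : E ≠ 0) {z V : Fin (l + m) → ℂ}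
    (hz : ∀ r, z r ≠ 0) (hV : fderiv ℂ (fun w i => mpow w (fiberExponent d E i)) z V = 0) :
    ∃ c : Fin l → ℂ, V = fun r => (∑ j, c j * fiberWeight d E j r) * z r := by
  have hker := sum_div_mul_eq_zero_of_fderiv_mpow_eq_zero _ hz hV
  simp only [fiberExponent, Fin.sum_univ_add] at hker
  refine ⟨fun j => V (Fin.castAdd m j) / z (Fin.castAdd m j) / E, funext fun r => ?_⟩
  refine Fin.addCases (fun j => ?_) (fun i => ?_) r
  · simp [fiberWeight, Pi.single_apply, hE, hz]
  · have hi : ∑ j, V (Fin.castAdd m j) / z (Fin.castAdd m j) * d j =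
        -(V (Fin.natAdd l i) / z (Fin.natAdd l i) * E) :=
      eq_neg_of_add_eq_zero_left (by simpa [Pi.single_apply] using hker i)
    have hs : ∑ j, V (Fin.castAdd m j) / z (Fin.castAdd m j) / E *
          (fiberWeight d E j (Fin.natAdd l i) : ℂ) =
        -(∑ j, V (Fin.castAdd m j) / z (Fin.castAdd m j) * d j) / E := by
      simp [fiberWeight, div_mul_eq_mul_div, neg_div, sum_div]
    rw [hs, hi]
    field_simp [hz (Fin.natAdd l i), Nat.cast_ne_zero.2 hE]

lemma weight_fiberWeight_add_eq_zero {α β : Fin (l + m) →₀ ℕ}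
    (hsep : ∀ j, α (Fin.castAdd m j) + β (Fin.castAdd m j) = 2 * d j)
    (hfree : ∑ i, α (Fin.natAdd l i) + ∑ i, β (Fin.natAdd l i) = 2 * E) (j : Fin l) :
    weight (fiberWeight d E j) α + weight (fiberWeight d E j) β = 0 := by
  have h1 : (α (Fin.castAdd m j) : ℤ) + β (Fin.castAdd m j) = 2 * d j := by
    exact_mod_cast hsep j
  have h2 : ((∑ i, α (Fin.natAdd l i) : ℕ) : ℤ) + (∑ i, β (Fin.natAdd l i) : ℕ) = 2 * E := by
    exact_mod_cast hfree
  rw [weight_fiberWeight, weight_fiberWeight]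
  linear_combination (E : ℤ) * h1 - (d j : ℤ) * h2

lemma sum_natAdd_add_sum_natAdd {k : ℕ} {α β : Fin (l + m) →₀ ℕ}
    (hdeg : ∑ i, α i + ∑ i, β i = 2 * k)
    (hsep : ∀ j, α (Fin.castAdd m j) + β (Fin.castAdd m j) = 2 * d j) :
    ∑ i, α (Fin.natAdd l i) + ∑ i, β (Fin.natAdd l i) = 2 * (k - ∑ j, d j) := by
  have hfixed : ∑ j, α (Fin.castAdd m j) + ∑ j, β (Fin.castAdd m j) = 2 * ∑ j, d j := by
    rw [← sum_add_distrib, mul_sum]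
    exact sum_congr rfl fun j _ => hsep j
  rw [Fin.sum_univ_add, Fin.sum_univ_add] at hdeg
  omega

end Fibres

theorem stmt14_general {l m k : ℕ}
    (J : Finset ((Fin (l + m) →₀ ℕ) × (Fin (l + m) →₀ ℕ)))
    (a : (Fin (l + m) →₀ ℕ) × (Fin (l + m) →₀ ℕ) → ℂ)
    (d : Fin l → ℕ) (hkD : ∑ j, d j < k)
    (hdeg : ∀ p ∈ J, (∑ i, p.1 i) + (∑ i, p.2 i) = 2 * k)
    (hsep : ∀ p ∈ J, ∀ j : Fin l,
      p.1 (Fin.castAdd m j) + p.2 (Fin.castAdd m j) = 2 * d j)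
    (hsym : ∀ p ∈ J, (p.2, p.1) ∈ J)
    (hherm : ∀ p : (Fin (l + m) →₀ ℕ) × (Fin (l + m) →₀ ℕ), a (p.2, p.1) = conj (a p))
    (hpsh : ∀ z V : Fin (l + m) → ℂ, 0 ≤ (leviForm J a z V).re)
    (G : (Fin (l + m) → ℂ) → (Fin m → ℂ))
    (hGdef : ∀ z i, G z i =
      (∏ j, z (Fin.castAdd m j) ^ d j) * z (Fin.natAdd l i) ^ (k - ∑ j, d j)) :
    ∀ z : Fin (l + m) → ℂ, (∀ i, z i ≠ 0) →
      ∀ V : Fin (l + m) → ℂ, fderiv ℂ G z V = 0 → leviForm J a z V = 0 := by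
  intro z hz V hV
  have hG : G = fun w i => mpow w (fiberExponent d (k - ∑ j, d j) i) :=
    funext fun w => funext fun i => by rw [hGdef, mpow_fiberExponent]
  obtain ⟨c, rfl⟩ := exists_eq_torus_direction_of_fderiv_eq_zero d _ (by omega) hz (hG ▸ hV)
  exact leviForm_eq_zero_of_weight_add_eq_zero J a hsym hherm hpsh _
    (fun p hp => weight_fiberWeight_add_eq_zero d _ (hsep p hp)
      (sum_natAdd_add_sum_natAdd d (hdeg p hp) (hsep p hp))) z c

/-- let `P : ℂⁿ → ℝ` (`n = l + m`) be a non-constant plurisubharmonic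
polynomial without pluriharmonic terms, homogeneous of degree `2k` and of degree
`2d_j > 0` in `(z_j, z̄_j)` for `j = 1,…,l`, with `D = d_1+⋯+d_l < k`.  Then, away from
the coordinate hyperplanes, `P` is pluriharmonic along the level sets of
`G(z) = z_1^{d_1}⋯z_l^{d_l}·(z_{l+1}^{k−D},…,z_n^{k−D})`: for every `z` with all
coordinates nonzero and every `V` in the kernel of the Jacobian `G'(z)`,
`L(P; z, V) = 0`. -/
theorem stmt14 {l m k : ℕ} (hl : 1 ≤ l) (hm : 1 ≤ m)
    (J : Finset ((Fin (l + m) →₀ ℕ) × (Fin (l + m) →₀ ℕ)))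
    (a : (Fin (l + m) →₀ ℕ) × (Fin (l + m) →₀ ℕ) → ℂ)
    (d : Fin l → ℕ) (hd : ∀ j, 0 < d j) (hkD : ∑ j, d j < k)
    (hdeg : ∀ p ∈ J, (∑ i, p.1 i) + (∑ i, p.2 i) = 2 * k)
    (hsep : ∀ p ∈ J, ∀ j : Fin l,
      p.1 (Fin.castAdd m j) + p.2 (Fin.castAdd m j) = 2 * d j)
    (hnp : ∀ p ∈ J, p.1 ≠ 0 ∧ p.2 ≠ 0)
    (hsym : ∀ p ∈ J, (p.2, p.1) ∈ J)
    (hherm : ∀ p : (Fin (l + m) →₀ ℕ) × (Fin (l + m) →₀ ℕ), a (p.2, p.1) = conj (a p))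
    (hpsh : ∀ z V : Fin (l + m) → ℂ, 0 ≤ (leviForm J a z V).re)
    (hnc : ∃ z w : Fin (l + m) → ℂ, pval J a z ≠ pval J a w)
    (G : (Fin (l + m) → ℂ) → (Fin m → ℂ))
    (hGdef : ∀ z i, G z i =
      (∏ j, z (Fin.castAdd m j) ^ d j) * z (Fin.natAdd l i) ^ (k - ∑ j, d j)) :
    ∀ z : Fin (l + m) → ℂ, (∀ i, z i ≠ 0) →
      ∀ V : Fin (l + m) → ℂ, fderiv ℂ G z V = 0 → leviForm J a z V = 0 :=
  stmt14_general J a d hkD hdeg hsep hsym hherm hpsh G hGdef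
end
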